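/- If T(1,0) = 1/μ, and for n ≥ 1, T(1,n) = 1/(λm(n)+μ) + (λm(n)/(λm(n)+μ))·T(1,n) + (μ/(λm(n)+μ))·T(2,n) and T(2,n) = 1/(λ+θ) + (λ/(λ+θ))·T(1,n) + (θ/(λ+θ))·T(1,n-1), then T(1,n) = n·(λ+θ+μ)/(μθ) + 1/μ for all n ≥ 0. -/

import Mathlib

/-! Clearing denominators, the busy-state recursion says `μ T₁(n) = 1 + μ T₂(n)` (the self-loop
term cancels, so the joining probability `m n` drops out), and the idle-state recursion says
`(λ + θ) T₂(n) = 1 + λ T₁(n) + θ T₁(n - 1)`. Eliminating `T₂(n)` gives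
`μθ T₁(n) = μθ T₁(n - 1) + (λ + θ + μ)`, so `T₁` is an arithmetic progression. -/

lemma mul_eq_one_add_mul_of_eq_self_loop {a mu x y : ℝ} (h : a + mu ≠ 0)
    (hx : x = 1 / (a + mu) + (a / (a + mu)) * x + (mu / (a + mu)) * y) :
    mu * x = 1 + mu * y := by
  field_simp at hx
  linear_combination hx

lemma mul_eq_one_add_of_eq_first_step {lam th x y z : ℝ} (h : lam + th ≠ 0)
    (hx : x = 1 / (lam + th) + (lam / (lam + th)) * y + (th / (lam + th)) * z) :
    (lam + th) * x = 1 + lam * y + th * z := by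
  field_simp at hx
  linear_combination hx

lemma eq_add_div_of_busy_idle {lam mu th x x' y : ℝ} (hmu : mu ≠ 0) (hth : th ≠ 0)
    (hbusy : mu * x = 1 + mu * y) (hidle : (lam + th) * y = 1 + lam * x + th * x') :
    x = x' + (lam + th + mu) / (mu * th) := by
  field_simp
  linear_combination (lam + th) * hbusy + mu * hidle

lemma eq_add_natCast_mul_of_eq_add {u : ℕ → ℝ} {c : ℝ} (h : ∀ n, u (n + 1) = u n + c) (n : ℕ) :
    u n = u 0 + n * c := by
  induction n with
  | zero => simp
  | succ k ih => rw [h, ih]; push_cast; ring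

theorem busy_sojourn_time (lam mu th : ℝ) (hlam : 0 < lam) (hmu : 0 < mu) (hth : 0 < th)
    (m : ℕ → ℝ) (hm : ∀ n, m n ∈ Set.Icc (0 : ℝ) 1)
    (T1 T2 : ℕ → ℝ)
    (h10 : T1 0 = 1 / mu)
    (h1 : ∀ n, 1 ≤ n → T1 n = 1 / (lam * m n + mu)
      + (lam * m n / (lam * m n + mu)) * T1 n + (mu / (lam * m n + mu)) * T2 n)
    (h2 : ∀ n, 1 ≤ n → T2 n = 1 / (lam + th)
      + (lam / (lam + th)) * T1 n + (th / (lam + th)) * T1 (n - 1)) :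
    ∀ n : ℕ, T1 n = n * ((lam + th + mu) / (mu * th)) + 1 / mu := by
  have step (n : ℕ) : T1 (n + 1) = T1 n + (lam + th + mu) / (mu * th) := by
    have hpos : 0 < lam * m (n + 1) + mu := by
      have := (hm (n + 1)).1
      positivity
    have hbusy := mul_eq_one_add_mul_of_eq_self_loop hpos.ne' (h1 (n + 1) n.succ_pos)
    have hidle := mul_eq_one_add_of_eq_first_step (by positivity) (h2 (n + 1) n.succ_pos)
    exact eq_add_div_of_busy_idle hmu.ne' hth.ne' hbusy hidle
  intro n
  rw [eq_add_natCast_mul_of_eq_add step n, h10, add_comm]
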